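/- arXiv:2506.20027 — 4 statements merged into one kernel-verified Lean document; each statement's English description precedes it below -/
import Mathlib

section
/- Rate double robustness bias bound for the AIPW score: let p⋆(H) = P(A = d^a | H) and η⋆(H) = E[Y | H, A = d^a]. For any measurable functions p̂ bounded below by c > 0 and η̂, with either the limit p′ = p⋆ or η′ = η⋆, the expectation of the difference of scores satisfies |E[φ(p̂, η̂) − φ(p′, η′)]| ≤ C · ‖p̂ − p⋆‖_{L²} · ‖η̂ − η⋆‖_{L²} for a constant C depending only on c, where φ(p, η) := 1{A=d^a}/p(H) · Y − (1{A=d^a} − p(H))/p(H) · η(H). -/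
/-!
Conditioning on `H` turns the score into a function of `H` alone:
`E[φ(p, η) | H] = (E[1{A = dᵃ} Y | H] - η p⋆) / p + η`, and `E[1{A = dᵃ} Y | H] = p⋆ η⋆`.
Hence `E[φ(p, η)] - E[η⋆] = E[(p⋆ - p)(η⋆ - η) / p]`, a product of the two nuisance errors: it
vanishes when `p = p⋆` or `η = η⋆`, and for `(p̂, η̂)` Cauchy–Schwarz together with `p̂ ≥ c` bounds
it by `c⁻¹ ‖p̂ - p⋆‖₂ ‖η̂ - η⋆‖₂`.
-/

open MeasureTheory

/-- The score `φ(p, η)`, with `I` standing for `1{A = dᵃ}`. -/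
noncomputable def aipwScore {Ω : Type*} (I Y p η : Ω → ℝ) (ω : Ω) : ℝ :=
  I ω / p ω * Y ω - (I ω - p ω) / p ω * η ω

section

variable {Ω : Type*} {m m0 : MeasurableSpace Ω} {P : Measure Ω}

theorem integral_norm_mul_norm_le_eLpNorm_two_mul {E : Type*} [NormedAddCommGroup E]
    {f g : Ω → E} (hf : MemLp f 2 P) (hg : MemLp g 2 P) :
    ∫ ω, ‖f ω‖ * ‖g ω‖ ∂P ≤ (eLpNorm f 2 P).toReal * (eLpNorm g 2 P).toReal := by
  have holder := integral_mul_norm_le_Lp_mul_Lq Real.HolderConjugate.two_two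
    (by simpa using hf) (by simpa using hg)
  rw [toReal_eLpNorm hf.aestronglyMeasurable, toReal_eLpNorm hg.aestronglyMeasurable,
    lpNorm_eq_integral_norm_rpow_toReal two_ne_zero ENNReal.ofNat_ne_top hf.aestronglyMeasurable,
    lpNorm_eq_integral_norm_rpow_toReal two_ne_zero ENNReal.ofNat_ne_top hg.aestronglyMeasurable]
  simpa using holder

theorem abs_integral_mul_div_le {f g p : Ω → ℝ} {c : ℝ} (hc : 0 < c) (hp : ∀ ω, c ≤ p ω)
    (hf : MemLp f 2 P) (hg : MemLp g 2 P) :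
    |∫ ω, f ω * g ω / p ω ∂P| ≤ c⁻¹ * (eLpNorm f 2 P).toReal * (eLpNorm g 2 P).toReal := by
  have hpoint : ∀ ω, ‖f ω * g ω / p ω‖ ≤ c⁻¹ * (‖f ω‖ * ‖g ω‖) := fun ω => by
    rw [norm_div, norm_mul, Real.norm_of_nonneg (hc.le.trans (hp ω)), div_eq_inv_mul]
    gcongr
    exact hp ω
  have hfg : Integrable (fun ω => ‖f ω‖ * ‖g ω‖) P := hf.norm.integrable_mul hg.norm
  calc |∫ ω, f ω * g ω / p ω ∂P|
      ≤ ∫ ω, c⁻¹ * (‖f ω‖ * ‖g ω‖) ∂P :=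
        norm_integral_le_of_norm_le (hfg.const_mul _) (ae_of_all _ hpoint)
    _ = c⁻¹ * ∫ ω, ‖f ω‖ * ‖g ω‖ ∂P := integral_const_mul _ _
    _ ≤ c⁻¹ * (eLpNorm f 2 P).toReal * (eLpNorm g 2 P).toReal := by
        rw [mul_assoc]
        gcongr
        exact integral_norm_mul_norm_le_eLpNorm_two_mul hf hg

variable [IsFiniteMeasure P] {I Y p η : Ω → ℝ} {B c : ℝ}

theorem condExp_aipwScore (hm : m ≤ m0) (hI : AEStronglyMeasurable I P)
    (hIB : ∀ᵐ ω ∂P, ‖I ω‖ ≤ B) (hY : Integrable Y P) (hc : 0 < c)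
    (hp : StronglyMeasurable[m] p) (hpc : ∀ ω, c ≤ p ω)
    (hη : StronglyMeasurable[m] η) (hηi : Integrable η P) :
    P[aipwScore I Y p η|m] =ᵐ[P] fun ω => (P[I * Y|m] ω - η ω * P[I|m] ω) / p ω + η ω := by
  have hp0 : ∀ ω, p ω ≠ 0 := fun ω => (hc.trans_le (hpc ω)).ne'
  have hinv : StronglyMeasurable[m] p⁻¹ := hp.measurable.inv.stronglyMeasurable
  have hinvB : ∀ ω, ‖p⁻¹ ω‖ ≤ c⁻¹ := fun ω => by
    rw [Pi.inv_apply, norm_inv, Real.norm_of_nonneg (hc.le.trans (hpc ω))]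
    exact inv_anti₀ hc (hpc ω)
  have hIi : Integrable I P := (integrable_const B).mono' hI hIB
  have hIY : Integrable (I * Y) P := hY.bdd_mul hI hIB
  have hηp : Integrable (η / p) P := by
    rw [div_eq_mul_inv]
    exact hηi.mul_bdd (hinv.mono hm).aestronglyMeasurable (ae_of_all _ hinvB)
  have h₁ : Integrable (p⁻¹ * (I * Y)) P :=
    hIY.bdd_mul (hinv.mono hm).aestronglyMeasurable (ae_of_all _ hinvB)
  have h₂ : Integrable (η / p * I) P := hηp.mul_bdd hI hIB
  have hsplit : aipwScore I Y p η = p⁻¹ * (I * Y) - η / p * I + η := by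
    ext ω
    simp only [aipwScore, Pi.add_apply, Pi.sub_apply, Pi.mul_apply, Pi.div_apply, Pi.inv_apply]
    field_simp [hp0 ω]
    ring
  rw [hsplit]
  filter_upwards [condExp_add (h₁.sub h₂) hηi m, condExp_sub h₁ h₂ m,
    condExp_mul_of_stronglyMeasurable_left hinv h₁ hIY,
    condExp_mul_of_stronglyMeasurable_left (hη.div hp) h₂ hIi] with ω hadd hsub hYI hI'
  rw [hadd, Pi.add_apply, hsub, Pi.sub_apply, hYI, hI', condExp_of_stronglyMeasurable hm hη hηi]
  simp only [Pi.mul_apply, Pi.div_apply, Pi.inv_apply]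
  field_simp [hp0 ω]

theorem integral_aipwScore_sub_integral (hm : m ≤ m0) (hI : AEStronglyMeasurable I P)
    (hIB : ∀ᵐ ω ∂P, ‖I ω‖ ≤ B) (hY : Integrable Y P) (hc : 0 < c)
    (hp : StronglyMeasurable[m] p) (hpc : ∀ ω, c ≤ p ω)
    (hη : StronglyMeasurable[m] η) (hηi : Integrable η P) {ps ηs : Ω → ℝ}
    (hps : ps =ᵐ[P] P[I|m]) (hr : (fun ω => ps ω * ηs ω) =ᵐ[P] P[I * Y|m])
    (hηs : Integrable ηs P) :
    ∫ ω, aipwScore I Y p η ω ∂P - ∫ ω, ηs ω ∂P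
      = ∫ ω, (ps ω - p ω) * (ηs ω - η ω) / p ω ∂P := by
  rw [← integral_condExp hm, ← integral_sub integrable_condExp hηs]
  refine integral_congr_ae ?_
  filter_upwards [condExp_aipwScore hm hI hIB hY hc hp hpc hη hηi, hps, hr] with ω hφ hq hqη
  rw [hφ, ← hqη, ← hq]
  field_simp [(hc.trans_le (hpc ω)).ne']
  ring

end

/-- Rate double robustness bias bound for the AIPW score (Lemma C.2): there is a constant
`C` depending only on the positivity constant `c` such that, whenever either `p′ = p⋆` or
`η′ = η⋆` (a.s.), `|E[φ(p̂,η̂) − φ(p′,η′)]| ≤ C ‖p̂ − p⋆‖_{L²} ‖η̂ − η⋆‖_{L²}`, where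
`φ(p,η) = 1{A=dᵃ}/p · Y − (1{A=dᵃ} − p)/p · η`, `p⋆ = P(A=dᵃ|H)` and
`η⋆ = E[Y|H,A=dᵃ]` (represented by `p⋆ · η⋆ = E[1{A=dᵃ}·Y|H]` a.s.). -/
theorem rate_double_robustness_bound (c : ℝ) (hc : 0 < c) :
    ∃ C > (0 : ℝ), ∀ (Ω : Type) (m0 : MeasurableSpace Ω) (P : Measure Ω),
      IsProbabilityMeasure P →
      ∀ (mH : MeasurableSpace Ω), mH ≤ m0 →
      ∀ (A d Y phat p' ps ηhat η' ηs : Ω → ℝ),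
      Measurable A → (∀ ω, A ω = 0 ∨ A ω = 1) →
      Measurable[mH] d → (∀ ω, d ω = 0 ∨ d ω = 1) →
      Integrable Y P →
      Measurable[mH] phat → (∀ ω, c ≤ phat ω ∧ phat ω ≤ 1) →
      Measurable[mH] p' → (∀ ω, c ≤ p' ω ∧ p' ω ≤ 1) →
      ps =ᵐ[P] P[(fun ω => if A ω = d ω then (1 : ℝ) else 0)|mH] →
      Measurable[mH] ηhat → MemLp ηhat 2 P →
      Measurable[mH] η' → MemLp η' 2 P →
      Measurable[mH] ηs → MemLp ηs 2 P →
      (fun ω => ps ω * ηs ω)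
          =ᵐ[P] P[(fun ω => (if A ω = d ω then (1 : ℝ) else 0) * Y ω)|mH] →
      (p' =ᵐ[P] ps ∨ η' =ᵐ[P] ηs) →
      |(∫ ω, ((if A ω = d ω then (1 : ℝ) else 0) / phat ω * Y ω
            - ((if A ω = d ω then (1 : ℝ) else 0) - phat ω) / phat ω * ηhat ω) ∂P)
        - ∫ ω, ((if A ω = d ω then (1 : ℝ) else 0) / p' ω * Y ω
            - ((if A ω = d ω then (1 : ℝ) else 0) - p' ω) / p' ω * η' ω) ∂P|
        ≤ C * (eLpNorm (phat - ps) 2 P).toReal * (eLpNorm (ηhat - ηs) 2 P).toReal := by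
  refine ⟨c⁻¹, inv_pos.2 hc, ?_⟩
  intro Ω m0 P _ mH hm A d Y phat p' ps ηhat η' ηs hA _ hd _ hY hphat hphatb hp' hp'b hps
    hηhat hηhat2 hη' hη'2 hηs hηs2 hr hcase
  set I : Ω → ℝ := fun ω => if A ω = d ω then 1 else 0
  have hI : Measurable[m0] I :=
    (Measurable.ite (measurableSet_eq_fun hA hd) measurable_const measurable_const).mono hm le_rfl
  have hI1 : ∀ ω, ‖I ω‖ ≤ 1 := fun ω => by by_cases h : A ω = d ω <;> simp [I, h]
  have hbias := fun p η (hp : Measurable[mH] p) (hpc : ∀ ω, c ≤ p ω ∧ p ω ≤ 1)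
      (hη : Measurable[mH] η) (hη2 : MemLp η 2 P) =>
    integral_aipwScore_sub_integral hm hI.aestronglyMeasurable (ae_of_all _ hI1) hY hc
      hp.stronglyMeasurable (fun ω => (hpc ω).1) hη.stronglyMeasurable
      (hη2.integrable one_le_two) hps hr (hηs2.integrable one_le_two)
  have hbias_limit : ∫ ω, (ps ω - p' ω) * (ηs ω - η' ω) / p' ω ∂P = 0 := by
    refine integral_eq_zero_of_ae ?_
    rcases hcase with h | h <;> filter_upwards [h] with ω hω <;> simp [hω]
  have hps_memLp : MemLp ps 2 P :=
    ((MemLp.of_bound hI.aestronglyMeasurable 1 (ae_of_all _ hI1)).condExp one_le_two).ae_eq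
      hps.symm
  have hphat_memLp : MemLp phat 2 P :=
    memLp_of_bounded (ae_of_all _ hphatb)
      (hphat.mono hm le_rfl : Measurable[m0] phat).aestronglyMeasurable 2
  change |∫ ω, aipwScore I Y phat ηhat ω ∂P - ∫ ω, aipwScore I Y p' η' ω ∂P| ≤ _
  rw [← sub_sub_sub_cancel_right _ _ (∫ ω, ηs ω ∂P), hbias phat ηhat hphat hphatb hηhat hηhat2,
    hbias p' η' hp' hp'b hη' hη'2, hbias_limit, sub_zero, eLpNorm_sub_comm phat,
    eLpNorm_sub_comm ηhat]
  exact abs_integral_mul_div_le hc (fun ω => (hphatb ω).1) (hps_memLp.sub hphat_memLp)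
    (hηs2.sub hηhat2)
end

section
/- Iterated expectation identity (iv) for mediation scores: with q⋆(b | H, M) := P(A = d^b | H, M), p⋆(b | H) := P(A = d^b | H), μ⋆(a, H, M) := E[Y | H, A = d^a, M], and ν⋆(a, H) := E[ μ⋆(a, H, M) | H, A = d^b ], for any measurable p(H) bounded away from 0: E[ q⋆(b|H,M)/p(H) · μ⋆(a, H, M) ] = E[ p⋆(b|H)/p(H) · ν⋆(a, H) ]. -/
open MeasureTheory

/-- Iterated expectation identity (iv) for mediation scores (Lemma C.3(iv)):
`E[ q⋆(b|H,M)/p(H) · μ⋆(a,H,M) ] = E[ p⋆(b|H)/p(H) · ν⋆(a,H) ]`, where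
`q⋆(b|H,M) = P(A=dᵇ|H,M)`, `p⋆(b|H) = P(A=dᵇ|H)`, `μ⋆` is a version of
`E[Y|H,A=dᵃ,M]` (via `q⋆(a|H,M)·μ⋆ = E[1{A=dᵃ}·Y|H,M]` a.s.), and `ν⋆` is a version of
`E[μ⋆|H,A=dᵇ]` (via `p⋆(b|H)·ν⋆ = E[1{A=dᵇ}·μ⋆|H]` a.s.); `dᵃ ≠ dᵇ` pointwise,
`P(A=dᵇ|H) > 0` a.s., `P(A=dᵃ|H,M) > 0` a.s., and `p` is `mH`-measurable with `p ≥ c > 0`. -/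
theorem iterated_expectation_iv {Ω : Type*} (mH mHM : MeasurableSpace Ω) [m0 : MeasurableSpace Ω]
    (P : Measure Ω) [IsProbabilityMeasure P]
    (hmH : mH ≤ mHM) (hmHM : mHM ≤ m0)
    (A : Ω → ℝ) (hA : Measurable A) (hA01 : ∀ ω, A ω = 0 ∨ A ω = 1)
    (da db : Ω → ℝ) (hda : Measurable[mH] da) (hdb : Measurable[mH] db)
    (hda01 : ∀ ω, da ω = 0 ∨ da ω = 1) (hdb01 : ∀ ω, db ω = 0 ∨ db ω = 1)
    (hdadb : ∀ ω, da ω ≠ db ω)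
    (Y : Ω → ℝ) (hY : Integrable Y P)
    (p qsa qsb psb μs νs : Ω → ℝ)
    (hpmeas : Measurable[mH] p) (c : ℝ) (hc : 0 < c) (hpc : ∀ᵐ ω ∂P, c ≤ p ω)
    (hqsa : qsa =ᵐ[P] P[(fun ω => if A ω = da ω then (1 : ℝ) else 0)|mHM])
    (hqsb : qsb =ᵐ[P] P[(fun ω => if A ω = db ω then (1 : ℝ) else 0)|mHM])
    (hpsb : psb =ᵐ[P] P[(fun ω => if A ω = db ω then (1 : ℝ) else 0)|mH])
    (hqsapos : ∀ᵐ ω ∂P, 0 < qsa ω) (hpsbpos : ∀ᵐ ω ∂P, 0 < psb ω)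
    (hμsmeas : Measurable[mHM] μs) (hμsint : Integrable μs P)
    (hμs : (fun ω => qsa ω * μs ω)
        =ᵐ[P] P[(fun ω => (if A ω = da ω then (1 : ℝ) else 0) * Y ω)|mHM])
    (hνsmeas : Measurable[mH] νs)
    (hνs : (fun ω => psb ω * νs ω)
        =ᵐ[P] P[(fun ω => (if A ω = db ω then (1 : ℝ) else 0) * μs ω)|mH]) :
    ∫ ω, qsb ω / p ω * μs ω ∂P = ∫ ω, psb ω / p ω * νs ω ∂P := by
  have hdb0 : Measurable[m0] db := hdb.mono (hmH.trans hmHM) le_rfl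
  have hp0 : Measurable[m0] p := hpmeas.mono (hmH.trans hmHM) le_rfl
  have hμs0 : Measurable[m0] μs := hμsmeas.mono hmHM le_rfl
  set Ib : Ω → ℝ := fun ω => if A ω = db ω then (1 : ℝ) else 0 with hIbdef
  have hIbmeasHM : Measurable[m0] Ib :=
    Measurable.ite (measurableSet_eq_fun (m := m0) hA hdb0)
      measurable_const measurable_const
  have hIbmeas : Measurable[m0] Ib := hIbmeasHM
  have hIbbd : ∀ ω, |Ib ω| ≤ 1 := by
    intro ω; simp only [hIbdef]; split <;> simp
  have hIbint : Integrable Ib P := by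
    refine Integrable.mono' (integrable_const 1)
      (hIbmeas.aestronglyMeasurable (μ := P)) ?_
    exact Filter.Eventually.of_forall fun ω => by simpa using hIbbd ω
  set f1 : Ω → ℝ := fun ω => μs ω / p ω with hf1def
  have hf1meas : StronglyMeasurable[mHM] f1 :=
    (hμsmeas.div (hpmeas.mono hmH le_rfl)).stronglyMeasurable
  have hboundint : Integrable (fun ω => |μs ω| / c) P := hμsint.abs.div_const c
  have hf1bd : ∀ᵐ ω ∂P, ‖f1 ω‖ ≤ |μs ω| / c := by
    filter_upwards [hpc] with ω hω
    have hpω : 0 < p ω := hc.trans_le hω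
    rw [hf1def, Real.norm_eq_abs, abs_div, abs_of_pos hpω]
    exact div_le_div_of_nonneg_left (abs_nonneg _) hc hω |>.trans_eq rfl
  have hf1int : Integrable f1 P :=
    Integrable.mono' hboundint ((hμs0.div hp0).aestronglyMeasurable (μ := P)) hf1bd
  have hf1Ibint : Integrable (f1 * Ib) P := by
    refine Integrable.mono' hboundint
      (((hμs0.div hp0).mul hIbmeas).aestronglyMeasurable (μ := P)) ?_
    filter_upwards [hf1bd] with ω hω
    rw [Pi.mul_apply, norm_mul]
    calc ‖f1 ω‖ * ‖Ib ω‖ ≤ (|μs ω| / c) * 1 := by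
          refine mul_le_mul hω ?_ (norm_nonneg _) (by positivity)
          simpa [Real.norm_eq_abs] using hIbbd ω
      _ = |μs ω| / c := mul_one _
  -- Step 1
  have step1 : ∫ ω, qsb ω / p ω * μs ω ∂P = ∫ ω, f1 ω * Ib ω ∂P := by
    have e1 : ∀ ω, qsb ω / p ω * μs ω = f1 ω * qsb ω := fun ω => by
      simp only [hf1def]; ring
    simp_rw [e1]
    have e2 : (fun ω => f1 ω * qsb ω) =ᵐ[P] fun ω => (f1 * P[Ib|mHM]) ω := by
      filter_upwards [hqsb] with ω hω
      simp only [Pi.mul_apply]; rw [hω]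
    rw [integral_congr_ae e2]
    have e3 : P[f1 * Ib|mHM] =ᵐ[P] f1 * P[Ib|mHM] :=
      condExp_mul_of_stronglyMeasurable_left hf1meas hf1Ibint hIbint
    rw [← integral_congr_ae e3, integral_condExp hmHM]
    simp only [Pi.mul_apply]
  -- Step 2
  set f2 : Ω → ℝ := fun ω => 1 / p ω with hf2def
  have hf2meas : StronglyMeasurable[mH] f2 :=
    ((measurable_const (a := (1:ℝ))).div hpmeas).stronglyMeasurable
  set g : Ω → ℝ := Ib * μs with hgdef
  have hg0 : Measurable[m0] g := hIbmeas.mul hμs0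
  have hgint : Integrable g P := by
    refine Integrable.mono' hμsint.abs (hg0.aestronglyMeasurable (μ := P)) ?_
    refine Filter.Eventually.of_forall fun ω => ?_
    rw [hgdef, Pi.mul_apply, norm_mul, Real.norm_eq_abs, Real.norm_eq_abs]
    calc |Ib ω| * |μs ω| ≤ 1 * |μs ω| :=
          mul_le_mul_of_nonneg_right (hIbbd ω) (abs_nonneg _)
      _ = |μs ω| := one_mul _
  have hf2gint : Integrable (f2 * g) P := by
    refine Integrable.mono' hboundint
      (((measurable_const.div hp0).mul hg0).aestronglyMeasurable (μ := P)) ?_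
    filter_upwards [hpc] with ω hω
    have hpω : 0 < p ω := hc.trans_le hω
    rw [Pi.mul_apply, norm_mul, hf2def, Real.norm_eq_abs, abs_div, abs_one, abs_of_pos hpω,
      hgdef, Pi.mul_apply, Real.norm_eq_abs, abs_mul]
    have h1 : 1 / p ω ≤ 1 / c := one_div_le_one_div_of_le hc hω
    have h2 : |Ib ω| * |μs ω| ≤ |μs ω| := by
      calc |Ib ω| * |μs ω| ≤ 1 * |μs ω| :=
            mul_le_mul_of_nonneg_right (hIbbd ω) (abs_nonneg _)
        _ = |μs ω| := one_mul _
    calc 1 / p ω * (|Ib ω| * |μs ω|) ≤ 1 / c * |μs ω| := by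
          refine mul_le_mul h1 h2 (by positivity) (by positivity)
      _ = |μs ω| / c := by ring
  have step2 : ∫ ω, f1 ω * Ib ω ∂P = ∫ ω, psb ω / p ω * νs ω ∂P := by
    have e1 : ∀ ω, f1 ω * Ib ω = (f2 * g) ω := fun ω => by
      simp only [hf1def, hf2def, hgdef, Pi.mul_apply]; ring
    simp_rw [e1]
    have e3 : P[f2 * g|mH] =ᵐ[P] f2 * P[g|mH] :=
      condExp_mul_of_stronglyMeasurable_left hf2meas hf2gint hgint
    rw [← integral_condExp (hmH.trans hmHM) (f := f2 * g), integral_congr_ae e3]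
    have e4 : (fun ω => (f2 * P[g|mH]) ω) =ᵐ[P] fun ω => psb ω / p ω * νs ω := by
      have hgeq : g = fun ω => (if A ω = db ω then (1:ℝ) else 0) * μs ω := rfl
      filter_upwards [hνs] with ω hω
      simp only [Pi.mul_apply, hf2def, hgeq]
      rw [← hω]; ring
    exact integral_congr_ae e4
  rw [step1, step2]
end

section
/- Multiple robustness of the cross-world score, case (ii): if p = p⋆ and μ = μ⋆ (the true propensity given H and the true outcome regression E[Y | H, A = d^a, M]), then for any bounded measurable q (bounded away from 0 and 1) and ν, E[ φ^{ab}(p⋆, q, μ⋆, ν) ] = θ^{ab} := E[ E[ E[Y | H, A = d^a, M] | H, A = d^b ] ]. -/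
open MeasureTheory

/-- Multiple robustness of the cross-world score, case (ii) (Lemma C.5(ii)): if the working
propensity given `H` equals the truth `p⋆(b|H) = P(A=dᵇ|H)` and the working outcome
regression equals the truth `μ⋆ = E[Y|H,A=dᵃ,M]`, then for any bounded `mHM`-measurable
working `q` (values in `[c, 1−c]`) and bounded `mH`-measurable `ν`,
`E[ φᵃᵇ(p⋆, q, μ⋆, ν) ] = θᵃᵇ = E[ E[ E[Y|H,A=dᵃ,M] | H,A=dᵇ ] ] = E[ν⋆]`. -/
theorem cross_world_score_mr_case_ii {Ω : Type*} (mH mHM : MeasurableSpace Ω) [m0 : MeasurableSpace Ω]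
    (P : Measure Ω) [IsProbabilityMeasure P]
    (hmH : mH ≤ mHM) (hmHM : mHM ≤ m0)
    (A : Ω → ℝ) (hA : Measurable A) (hA01 : ∀ ω, A ω = 0 ∨ A ω = 1)
    (da db : Ω → ℝ) (hda : Measurable[mH] da) (hdb : Measurable[mH] db)
    (hda01 : ∀ ω, da ω = 0 ∨ da ω = 1) (hdb01 : ∀ ω, db ω = 0 ∨ db ω = 1)
    (hdadb : ∀ ω, da ω ≠ db ω)
    (Y : Ω → ℝ) (hY : Integrable Y P)
    (psb qsa qsb μs νs qa qb ν : Ω → ℝ)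
    (c : ℝ) (hc : 0 < c)
    (hpsb : psb =ᵐ[P] P[(fun ω => if A ω = db ω then (1 : ℝ) else 0)|mH])
    (hqsa : qsa =ᵐ[P] P[(fun ω => if A ω = da ω then (1 : ℝ) else 0)|mHM])
    (hqsb : qsb =ᵐ[P] P[(fun ω => if A ω = db ω then (1 : ℝ) else 0)|mHM])
    (hpsbc : ∀ᵐ ω ∂P, c < psb ω ∧ psb ω < 1 - c)
    (hqsac : ∀ᵐ ω ∂P, c < qsa ω ∧ qsa ω < 1 - c)
    (hμsmeas : Measurable[mHM] μs) (hμsint : Integrable μs P)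
    (hμs : (fun ω => qsa ω * μs ω)
        =ᵐ[P] P[(fun ω => (if A ω = da ω then (1 : ℝ) else 0) * Y ω)|mHM])
    (hνsmeas : Measurable[mH] νs)
    (hνs : (fun ω => psb ω * νs ω)
        =ᵐ[P] P[(fun ω => (if A ω = db ω then (1 : ℝ) else 0) * μs ω)|mH])
    (hqameas : Measurable[mHM] qa) (hqac : ∀ ω, c ≤ qa ω ∧ qa ω ≤ 1 - c)
    (hqbmeas : Measurable[mHM] qb) (hqbc : ∀ ω, c ≤ qb ω ∧ qb ω ≤ 1 - c)
    (hνmeas : Measurable[mH] ν) (Bν : ℝ) (hνB : ∀ ω, |ν ω| ≤ Bν) :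
    ∫ ω, ((if A ω = da ω then (1 : ℝ) else 0) * qb ω / (psb ω * qa ω) * (Y ω - μs ω)
        + (if A ω = db ω then (1 : ℝ) else 0) / psb ω * (μs ω - ν ω) + ν ω) ∂P
      = ∫ ω, νs ω ∂P := by
  classical
  have hmH0 : mH ≤ m0 := hmH.trans hmHM
  set Ia : Ω → ℝ := fun ω => if A ω = da ω then (1 : ℝ) else 0 with hIa_def
  set Ib : Ω → ℝ := fun ω => if A ω = db ω then (1 : ℝ) else 0 with hIb_def
  have hIameas : Measurable[m0] Ia :=
    Measurable.ite (measurableSet_eq_fun hA (hda.mono hmH0 le_rfl))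
      measurable_const measurable_const
  have hIbmeas : Measurable[m0] Ib :=
    Measurable.ite (measurableSet_eq_fun hA (hdb.mono hmH0 le_rfl))
      measurable_const measurable_const
  have hIabd : ∀ ω, ‖Ia ω‖ ≤ 1 := by
    intro ω; simp only [hIa_def]; split_ifs <;> simp
  have hIbbd : ∀ ω, ‖Ib ω‖ ≤ 1 := by
    intro ω; simp only [hIb_def]; split_ifs <;> simp
  have hνmeas0 : Measurable[m0] ν := hνmeas.mono hmH0 le_rfl
  have hνint : Integrable ν P := by
    refine (integrable_const Bν).mono' hνmeas0.aestronglyMeasurable ?_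
    exact Filter.Eventually.of_forall fun ω => by simpa using hνB ω
  have hμsmeas0 : Measurable[m0] μs := hμsmeas.mono hmHM le_rfl
  -- true propensity as an actual conditional expectation
  set g : Ω → ℝ := P[Ib|mH] with hg_def
  have hg_sm : StronglyMeasurable[mH] g := stronglyMeasurable_condExp
  have hgmeas : Measurable[m0] g := hg_sm.measurable.mono hmH0 le_rfl
  have hpsbg : psb =ᵐ[P] g := hpsb
  have hgc : ∀ᵐ ω ∂P, c < g ω ∧ g ω < 1 - c := by
    filter_upwards [hpsbg, hpsbc] with ω h1 h2
    rw [← h1]; exact h2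
  -- integrable products
  have hIaY : Integrable (fun ω => Ia ω * Y ω) P :=
    hY.bdd_mul hIameas.aestronglyMeasurable (Filter.Eventually.of_forall hIabd)
  have hIaμ : Integrable (fun ω => Ia ω * μs ω) P :=
    hμsint.bdd_mul hIameas.aestronglyMeasurable (Filter.Eventually.of_forall hIabd)
  have hIbμ : Integrable (fun ω => Ib ω * μs ω) P :=
    hμsint.bdd_mul hIbmeas.aestronglyMeasurable (Filter.Eventually.of_forall hIbbd)
  have hIbν : Integrable (fun ω => Ib ω * ν ω) P :=
    hνint.bdd_mul hIbmeas.aestronglyMeasurable (Filter.Eventually.of_forall hIbbd)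
  have hIaint : Integrable Ia P := by
    refine (integrable_const (1 : ℝ)).mono' hIameas.aestronglyMeasurable ?_
    exact Filter.Eventually.of_forall fun ω => by simpa using hIabd ω
  have hIbint : Integrable Ib P := by
    refine (integrable_const (1 : ℝ)).mono' hIbmeas.aestronglyMeasurable ?_
    exact Filter.Eventually.of_forall fun ω => by simpa using hIbbd ω
  -- the pieces
  set f1 : Ω → ℝ := fun ω => qb ω / (g ω * qa ω) with hf1_def
  set h1 : Ω → ℝ := fun ω => Ia ω * Y ω - Ia ω * μs ω with hh1_def
  set f2 : Ω → ℝ := fun ω => (g ω)⁻¹ with hf2_def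
  set h2 : Ω → ℝ := fun ω => Ib ω * μs ω - Ib ω * ν ω with hh2_def
  have hf1_sm : StronglyMeasurable[mHM] f1 :=
    (hqbmeas.div ((hg_sm.measurable.mono hmH le_rfl).mul hqameas)).stronglyMeasurable
  have hf2_sm : StronglyMeasurable[mH] f2 := (hg_sm.measurable.inv).stronglyMeasurable
  have hf1_bd : ∀ᵐ ω ∂P, ‖f1 ω‖ ≤ (1 - c) / (c * c) := by
    filter_upwards [hgc] with ω hω
    have hqa := hqac ω; have hqb := hqbc ω
    have hg0 : (0:ℝ) < g ω := hc.trans hω.1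
    have hden : c * c ≤ g ω * qa ω :=
      mul_le_mul hω.1.le hqa.1 hc.le hg0.le
    have hdenpos : (0:ℝ) < g ω * qa ω := mul_pos hg0 (hc.trans_le hqa.1)
    have hnum : |qb ω| ≤ 1 - c := by
      rw [abs_of_nonneg (hc.le.trans hqb.1)]; exact hqb.2
    rw [Real.norm_eq_abs, hf1_def, abs_div, abs_of_pos hdenpos]
    exact div_le_div₀ (by linarith [hqb.1, hc]) hnum (mul_pos hc hc) hden
  have hf2_bd : ∀ᵐ ω ∂P, ‖f2 ω‖ ≤ c⁻¹ := by
    filter_upwards [hgc] with ω hω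
    have hg0 : (0:ℝ) < g ω := hc.trans hω.1
    rw [Real.norm_eq_abs, hf2_def, abs_inv, abs_of_pos hg0]
    exact inv_anti₀ hc hω.1.le
  have hh1int : Integrable h1 P := hIaY.sub hIaμ
  have hh2int : Integrable h2 P := hIbμ.sub hIbν
  have hf1h1int : Integrable (fun ω => f1 ω * h1 ω) P :=
    hh1int.bdd_mul (hf1_sm.mono hmHM).aestronglyMeasurable hf1_bd
  have hf2h2int : Integrable (fun ω => f2 ω * h2 ω) P :=
    hh2int.bdd_mul (hf2_sm.mono hmH0).aestronglyMeasurable hf2_bd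
  -- Step 1: E[h1 | mHM] = 0 a.e.
  have hEIaμ : P[(fun ω => Ia ω * μs ω)|mHM] =ᵐ[P] fun ω => qsa ω * μs ω := by
    have hmulint : Integrable (μs * Ia) P :=
      hIaμ.congr (Filter.Eventually.of_forall fun ω => mul_comm _ _)
    have hpull := condExp_mul_of_stronglyMeasurable_left (μ := P) hμsmeas.stronglyMeasurable
      hmulint hIaint
    have hrw : P[(fun ω => Ia ω * μs ω)|mHM] =ᵐ[P] P[μs * Ia|mHM] := by
      refine condExp_congr_ae (Filter.Eventually.of_forall fun ω => ?_)
      simp [mul_comm]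
    refine hrw.trans (hpull.trans ?_)
    filter_upwards [hqsa] with ω hω
    simp only [Pi.mul_apply]
    rw [← hω, mul_comm]
  have hEh1 : P[h1|mHM] =ᵐ[P] 0 := by
    have hsub := condExp_sub (μ := P) (m := mHM) hIaY hIaμ
    refine hsub.trans ?_
    have e1 : P[(fun ω => Ia ω * Y ω)|mHM]
        = P[(fun ω => (if A ω = da ω then (1:ℝ) else 0) * Y ω)|mHM] := rfl
    filter_upwards [hμs.symm, hEIaμ] with ω h1ω h2ω
    simp only [Pi.sub_apply, Pi.zero_apply]
    rw [h2ω, e1, h1ω, sub_self]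
  have hint1 : ∫ ω, f1 ω * h1 ω ∂P = 0 := by
    rw [← integral_condExp hmHM (f := fun ω => f1 ω * h1 ω)]
    have hpull := condExp_mul_of_stronglyMeasurable_left (μ := P) hf1_sm
      (hf1h1int.congr (Filter.Eventually.of_forall fun ω => rfl)) hh1int
    have : P[f1 * h1|mHM] =ᵐ[P] 0 := by
      refine hpull.trans ?_
      filter_upwards [hEh1] with ω hω
      simp [hω]
    have heq : P[(fun ω => f1 ω * h1 ω)|mHM] =ᵐ[P] 0 := this
    rw [integral_congr_ae heq]
    simp
  -- Step 2: E[h2 | mH] = g * νs - g * ν a.e.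
  have hEIbν : P[(fun ω => Ib ω * ν ω)|mH] =ᵐ[P] fun ω => ν ω * g ω := by
    have hmulint : Integrable (ν * Ib) P :=
      hIbν.congr (Filter.Eventually.of_forall fun ω => mul_comm _ _)
    have hpull := condExp_mul_of_stronglyMeasurable_left (μ := P)
      hνmeas.stronglyMeasurable hmulint hIbint
    have hrw : P[(fun ω => Ib ω * ν ω)|mH] =ᵐ[P] P[ν * Ib|mH] := by
      refine condExp_congr_ae (Filter.Eventually.of_forall fun ω => ?_)
      simp [mul_comm]
    exact hrw.trans hpull
  have hEh2 : P[h2|mH] =ᵐ[P] fun ω => g ω * νs ω - ν ω * g ω := by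
    have hsub := condExp_sub (μ := P) (m := mH) hIbμ hIbν
    refine hsub.trans ?_
    have e2 : P[(fun ω => Ib ω * μs ω)|mH]
        = P[(fun ω => (if A ω = db ω then (1:ℝ) else 0) * μs ω)|mH] := rfl
    filter_upwards [hνs.symm, hEIbν, hpsbg] with ω h1ω h2ω h3ω
    simp only [Pi.sub_apply]
    rw [h2ω, e2, h1ω, h3ω]
  have hEf2h2 : P[(fun ω => f2 ω * h2 ω)|mH] =ᵐ[P] fun ω => νs ω - ν ω := by
    have hpull := condExp_mul_of_stronglyMeasurable_left (μ := P) hf2_sm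
      (hf2h2int.congr (Filter.Eventually.of_forall fun ω => rfl)) hh2int
    have heq : P[(fun ω => f2 ω * h2 ω)|mH] =ᵐ[P] f2 * P[h2|mH] := hpull
    refine heq.trans ?_
    filter_upwards [hEh2, hgc] with ω h1ω h2ω
    have hg0 : g ω ≠ 0 := (hc.trans h2ω.1).ne'
    simp only [Pi.mul_apply, h1ω, hf2_def]
    field_simp
  have hνsint : Integrable νs P := by
    have h1' : Integrable (fun ω => νs ω - ν ω) P :=
      (integrable_condExp (m := mH)).congr hEf2h2
    have := h1'.add hνint
    refine this.congr (Filter.Eventually.of_forall fun ω => ?_)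
    simp
  have hint2 : ∫ ω, f2 ω * h2 ω ∂P = ∫ ω, νs ω ∂P - ∫ ω, ν ω ∂P := by
    rw [← integral_condExp hmH0 (f := fun ω => f2 ω * h2 ω), integral_congr_ae hEf2h2,
      integral_sub hνsint hνint]
  -- assemble
  have hcongr : (fun ω => ((if A ω = da ω then (1 : ℝ) else 0) * qb ω / (psb ω * qa ω)
        * (Y ω - μs ω) + (if A ω = db ω then (1 : ℝ) else 0) / psb ω * (μs ω - ν ω) + ν ω))
      =ᵐ[P] fun ω => f1 ω * h1 ω + f2 ω * h2 ω + ν ω := by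
    filter_upwards [hpsbg] with ω hω
    simp only [hf1_def, hh1_def, hf2_def, hh2_def, hIa_def, hIb_def, hω]
    ring
  have hint12 : Integrable (fun ω => f1 ω * h1 ω + f2 ω * h2 ω) P :=
    hf1h1int.add hf2h2int
  rw [integral_congr_ae hcongr, integral_add hint12 hνint,
    integral_add hf1h1int hf2h2int, hint1, hint2]
  ring
end

section
/- Multiple robustness of the cross-world score, case (iv): if ν = ν⋆ and μ = μ⋆ (the true nested regression ν⋆(a,H) = E[μ⋆(a,H,M) | H, A=d^b] and the true outcome regression μ⋆), then for any bounded measurable p and q (each bounded away from 0 and 1), E[ φ^{ab}(p, q, μ⋆, ν⋆) ] = θ^{ab} = E[ ν⋆(a, H) ]. -/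
open MeasureTheory


private lemma integral_bdd_mul_condexp {Ω : Type*} {m : MeasurableSpace Ω}
    [m0 : MeasurableSpace Ω] (hm : m ≤ m0) (P : Measure Ω) [IsProbabilityMeasure P]
    {g f : Ω → ℝ} (hg : Measurable[m] g) {C : ℝ} (hgC : ∀ ω, |g ω| ≤ C)
    (hf : Integrable f P) :
    ∫ ω, g ω * f ω ∂P = ∫ ω, g ω * (P[f|m]) ω ∂P := by
  have hgm0 : Measurable[m0] g := hg.mono hm le_rfl
  have hint : Integrable (fun ω => g ω * f ω) P :=
    hf.bdd_mul hgm0.aestronglyMeasurable (Filter.Eventually.of_forall fun ω => by simpa using hgC ω)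
  have h1 : ∫ ω, g ω * f ω ∂P = ∫ ω, (P[(fun ω => g ω * f ω)|m]) ω ∂P :=
    (integral_condExp hm).symm
  have h2 : P[(fun ω => g ω * f ω)|m] =ᵐ[P] fun ω => g ω * (P[f|m]) ω :=
    condExp_mul_of_stronglyMeasurable_left (μ := P) hg.stronglyMeasurable hint hf
  rw [h1, integral_congr_ae h2]

/-- Multiple robustness of the cross-world score, case (iv) (Lemma C.5(iv)): if the working
outcome regression equals the truth `μ⋆ = E[Y|H,A=dᵃ,M]` and the working nested regression
equals the truth `ν⋆(a,H) = E[μ⋆|H,A=dᵇ]`, then for any bounded `mH`-measurable working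
propensity `p` and bounded `mHM`-measurable working `q` (values in `[c, 1−c]`),
`E[ φᵃᵇ(p, q, μ⋆, ν⋆) ] = θᵃᵇ = E[ν⋆]`. -/
theorem cross_world_score_mr_case_iv {Ω : Type*} (mH mHM : MeasurableSpace Ω) [m0 : MeasurableSpace Ω]
    (P : Measure Ω) [IsProbabilityMeasure P]
    (hmH : mH ≤ mHM) (hmHM : mHM ≤ m0)
    (A : Ω → ℝ) (hA : Measurable A) (hA01 : ∀ ω, A ω = 0 ∨ A ω = 1)
    (da db : Ω → ℝ) (hda : Measurable[mH] da) (hdb : Measurable[mH] db)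
    (hda01 : ∀ ω, da ω = 0 ∨ da ω = 1) (hdb01 : ∀ ω, db ω = 0 ∨ db ω = 1)
    (hdadb : ∀ ω, da ω ≠ db ω)
    (Y : Ω → ℝ) (hY : Integrable Y P)
    (psb qsa qsb μs νs p qa qb : Ω → ℝ)
    (c : ℝ) (hc : 0 < c)
    (hpsb : psb =ᵐ[P] P[(fun ω => if A ω = db ω then (1 : ℝ) else 0)|mH])
    (hqsa : qsa =ᵐ[P] P[(fun ω => if A ω = da ω then (1 : ℝ) else 0)|mHM])
    (hqsb : qsb =ᵐ[P] P[(fun ω => if A ω = db ω then (1 : ℝ) else 0)|mHM])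
    (hpsbc : ∀ᵐ ω ∂P, c < psb ω ∧ psb ω < 1 - c)
    (hqsac : ∀ᵐ ω ∂P, c < qsa ω ∧ qsa ω < 1 - c)
    (hμsmeas : Measurable[mHM] μs) (hμsint : Integrable μs P)
    (hμs : (fun ω => qsa ω * μs ω)
        =ᵐ[P] P[(fun ω => (if A ω = da ω then (1 : ℝ) else 0) * Y ω)|mHM])
    (hνsmeas : Measurable[mH] νs)
    (hνs : (fun ω => psb ω * νs ω)
        =ᵐ[P] P[(fun ω => (if A ω = db ω then (1 : ℝ) else 0) * μs ω)|mH])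
    (hpmeas : Measurable[mH] p) (hpc : ∀ ω, c ≤ p ω ∧ p ω ≤ 1 - c)
    (hqameas : Measurable[mHM] qa) (hqac : ∀ ω, c ≤ qa ω ∧ qa ω ≤ 1 - c)
    (hqbmeas : Measurable[mHM] qb) (hqbc : ∀ ω, c ≤ qb ω ∧ qb ω ≤ 1 - c) :
    ∫ ω, ((if A ω = da ω then (1 : ℝ) else 0) * qb ω / (p ω * qa ω) * (Y ω - μs ω)
        + (if A ω = db ω then (1 : ℝ) else 0) / p ω * (μs ω - νs ω) + νs ω) ∂P
      = ∫ ω, νs ω ∂P := by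
  classical
  have hppos : ∀ ω, 0 < p ω := fun ω => lt_of_lt_of_le hc (hpc ω).1
  have hqapos : ∀ ω, 0 < qa ω := fun ω => lt_of_lt_of_le hc (hqac ω).1
  have hqbpos : ∀ ω, 0 < qb ω := fun ω => lt_of_lt_of_le hc (hqbc ω).1
  have hIaM : Measurable[m0] (fun ω => if A ω = da ω then (1:ℝ) else 0) :=
    Measurable.ite (measurableSet_eq_fun hA (hda.mono (hmH.trans hmHM) le_rfl))
      measurable_const measurable_const
  have hIbM : Measurable[m0] (fun ω => if A ω = db ω then (1:ℝ) else 0) :=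
    Measurable.ite (measurableSet_eq_fun hA (hdb.mono (hmH.trans hmHM) le_rfl))
      measurable_const measurable_const
  have hIa0 : Measurable[m0] (fun ω => if A ω = da ω then (1:ℝ) else 0) :=
    hIaM
  have hIb0 : Measurable[m0] (fun ω => if A ω = db ω then (1:ℝ) else 0) :=
    hIbM
  have hν0 : Measurable[m0] νs := hνsmeas.mono (hmH.trans hmHM) le_rfl
  have hIa_bd : ∀ ω, ‖(if A ω = da ω then (1:ℝ) else 0)‖ ≤ 1 := by
    intro ω; by_cases h : A ω = da ω <;> simp [h]
  have hIb_bd : ∀ ω, ‖(if A ω = db ω then (1:ℝ) else 0)‖ ≤ 1 := by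
    intro ω; by_cases h : A ω = db ω <;> simp [h]
  have hIa_int : Integrable (fun ω => if A ω = da ω then (1:ℝ) else 0) P := by
    refine (integrable_const (1:ℝ)).mono' hIa0.aestronglyMeasurable ?_
    filter_upwards with ω using hIa_bd ω
  have hIb_int : Integrable (fun ω => if A ω = db ω then (1:ℝ) else 0) P := by
    refine (integrable_const (1:ℝ)).mono' hIb0.aestronglyMeasurable ?_
    filter_upwards with ω using hIb_bd ω
  -- νs is integrable
  have hpsbνs_int : Integrable (fun ω => psb ω * νs ω) P :=
    (integrable_condExp).congr hνs.symm
  have hνs_int : Integrable νs P := by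
    refine Integrable.mono' (hpsbνs_int.norm.const_mul (1/c))
      hν0.aestronglyMeasurable ?_
    filter_upwards [hpsbc] with ω hω
    have hpos : 0 < psb ω := lt_trans hc hω.1
    have hn : ‖psb ω * νs ω‖ = psb ω * ‖νs ω‖ := by
      rw [norm_mul, Real.norm_of_nonneg hpos.le]
    rw [hn, div_mul_eq_mul_div, one_mul, le_div_iff₀ hc]
    nlinarith [norm_nonneg (νs ω), hω.1]
  -- products with indicators are integrable
  have hIaY_int : Integrable (fun ω => (if A ω = da ω then (1:ℝ) else 0) * Y ω) P :=
    hY.bdd_mul hIa0.aestronglyMeasurable (Filter.Eventually.of_forall hIa_bd)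
  have hIaμ_int : Integrable (fun ω => (if A ω = da ω then (1:ℝ) else 0) * μs ω) P :=
    hμsint.bdd_mul hIa0.aestronglyMeasurable (Filter.Eventually.of_forall hIa_bd)
  have hIbμ_int : Integrable (fun ω => (if A ω = db ω then (1:ℝ) else 0) * μs ω) P :=
    hμsint.bdd_mul hIb0.aestronglyMeasurable (Filter.Eventually.of_forall hIb_bd)
  have hIbν_int : Integrable (fun ω => (if A ω = db ω then (1:ℝ) else 0) * νs ω) P :=
    hνs_int.bdd_mul hIb0.aestronglyMeasurable (Filter.Eventually.of_forall hIb_bd)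
  -- pull-out: E[Ia⬝μs | mHM] = qsa⬝μs
  have hcondIaμ : P[(fun ω => (if A ω = da ω then (1:ℝ) else 0) * μs ω)|mHM]
      =ᵐ[P] fun ω => qsa ω * μs ω := by
    have hmul : (fun ω => (if A ω = da ω then (1:ℝ) else 0) * μs ω)
        = μs * (fun ω => if A ω = da ω then (1:ℝ) else 0) := by
      funext ω; simp [mul_comm]
    rw [hmul]
    have h := condExp_mul_of_stronglyMeasurable_left (μ := P) hμsmeas.stronglyMeasurable
      (hmul ▸ hIaμ_int) hIa_int
    refine h.trans ?_
    filter_upwards [hqsa] with ω hω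
    simp only [Pi.mul_apply]
    rw [← hω]; ring
  -- pull-out: E[Ib⬝νs | mH] = psb⬝νs
  have hcondIbν : P[(fun ω => (if A ω = db ω then (1:ℝ) else 0) * νs ω)|mH]
      =ᵐ[P] fun ω => psb ω * νs ω := by
    have hmul : (fun ω => (if A ω = db ω then (1:ℝ) else 0) * νs ω)
        = νs * (fun ω => if A ω = db ω then (1:ℝ) else 0) := by
      funext ω; simp [mul_comm]
    rw [hmul]
    have h := condExp_mul_of_stronglyMeasurable_left (μ := P) hνsmeas.stronglyMeasurable
      (hmul ▸ hIbν_int) hIb_int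
    refine h.trans ?_
    filter_upwards [hpsb] with ω hω
    simp only [Pi.mul_apply]
    rw [← hω]; ring
  -- the two residuals have vanishing conditional expectations
  have hzero1 : P[(fun ω => (if A ω = da ω then (1:ℝ) else 0) * (Y ω - μs ω))|mHM]
      =ᵐ[P] (0 : Ω → ℝ) := by
    have heq : (fun ω => (if A ω = da ω then (1:ℝ) else 0) * (Y ω - μs ω))
        = (fun ω => (if A ω = da ω then (1:ℝ) else 0) * Y ω)
          - (fun ω => (if A ω = da ω then (1:ℝ) else 0) * μs ω) := by
      funext ω; simp only [Pi.sub_apply]; ring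
    rw [heq]
    have h := condExp_sub (μ := P) (m := mHM) hIaY_int hIaμ_int
    refine h.trans ?_
    filter_upwards [hμs, hcondIaμ] with ω h1 h2
    simp only [Pi.sub_apply, Pi.zero_apply]
    rw [← h1, h2]; ring
  have hzero2 : P[(fun ω => (if A ω = db ω then (1:ℝ) else 0) * (μs ω - νs ω))|mH]
      =ᵐ[P] (0 : Ω → ℝ) := by
    have heq : (fun ω => (if A ω = db ω then (1:ℝ) else 0) * (μs ω - νs ω))
        = (fun ω => (if A ω = db ω then (1:ℝ) else 0) * μs ω)
          - (fun ω => (if A ω = db ω then (1:ℝ) else 0) * νs ω) := by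
      funext ω; simp only [Pi.sub_apply]; ring
    rw [heq]
    have h := condExp_sub (μ := P) (m := mH) hIbμ_int hIbν_int
    refine h.trans ?_
    filter_upwards [hνs, hcondIbν] with ω h1 h2
    simp only [Pi.sub_apply, Pi.zero_apply]
    rw [← h1, h2]; ring
  -- bounds for the weight functions
  have h1c : (0:ℝ) < 1 - c := by
    have hω := P.nonempty_of_neZero
    obtain ⟨ω⟩ := hω
    exact lt_of_lt_of_le hc (le_trans (hqbc ω).1 (hqbc ω).2)
  have hg1C : ∀ ω, |qb ω / (p ω * qa ω)| ≤ (1 - c) / (c * c) := by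
    intro ω
    have hden : 0 < p ω * qa ω := mul_pos (hppos ω) (hqapos ω)
    rw [abs_of_pos (div_pos (hqbpos ω) hden)]
    exact div_le_div₀ h1c.le (hqbc ω).2 (mul_pos hc hc)
      (mul_le_mul (hpc ω).1 (hqac ω).1 hc.le (hppos ω).le)
  have hg2C : ∀ ω, |1 / p ω| ≤ 1 / c := by
    intro ω
    rw [abs_of_pos (one_div_pos.mpr (hppos ω))]
    exact one_div_le_one_div_of_le hc (hpc ω).1
  -- first term integrates to zero
  have hf1_int : Integrable (fun ω => (if A ω = da ω then (1:ℝ) else 0) * (Y ω - μs ω)) P :=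
    (hY.sub hμsint).bdd_mul hIa0.aestronglyMeasurable (Filter.Eventually.of_forall hIa_bd)
  have hT1 : ∫ ω, (if A ω = da ω then (1:ℝ) else 0) * qb ω / (p ω * qa ω) * (Y ω - μs ω) ∂P
      = 0 := by
    have hg1meas : Measurable[mHM] (fun ω => qb ω / (p ω * qa ω)) :=
      hqbmeas.div ((hpmeas.mono hmH le_rfl).mul hqameas)
    have step : ∫ ω, (if A ω = da ω then (1:ℝ) else 0) * qb ω / (p ω * qa ω) * (Y ω - μs ω) ∂P
        = ∫ ω, (qb ω / (p ω * qa ω))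
            * ((if A ω = da ω then (1:ℝ) else 0) * (Y ω - μs ω)) ∂P := by
      refine integral_congr_ae (Filter.Eventually.of_forall fun ω => ?_)
      ring
    rw [step, integral_bdd_mul_condexp (m0 := m0) hmHM P hg1meas hg1C hf1_int]
    refine integral_eq_zero_of_ae ?_
    filter_upwards [hzero1] with ω hω
    simp only [Pi.zero_apply] at hω ⊢
    rw [hω, mul_zero]
  -- second term integrates to zero
  have hf2_int : Integrable (fun ω => (if A ω = db ω then (1:ℝ) else 0) * (μs ω - νs ω)) P :=
    (hμsint.sub hνs_int).bdd_mul hIb0.aestronglyMeasurable (Filter.Eventually.of_forall hIb_bd)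
  have hT2 : ∫ ω, (if A ω = db ω then (1:ℝ) else 0) / p ω * (μs ω - νs ω) ∂P = 0 := by
    have hg2meas : Measurable[mH] (fun ω => 1 / p ω) :=
      (measurable_const : Measurable[mH] fun _ : Ω => (1:ℝ)).div hpmeas
    have step : ∫ ω, (if A ω = db ω then (1:ℝ) else 0) / p ω * (μs ω - νs ω) ∂P
        = ∫ ω, (1 / p ω) * ((if A ω = db ω then (1:ℝ) else 0) * (μs ω - νs ω)) ∂P := by
      refine integral_congr_ae (Filter.Eventually.of_forall fun ω => ?_)
      ring
    rw [step, integral_bdd_mul_condexp (m0 := m0) (hmH.trans hmHM) P hg2meas hg2C hf2_int]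
    refine integral_eq_zero_of_ae ?_
    filter_upwards [hzero2] with ω hω
    simp only [Pi.zero_apply] at hω ⊢
    rw [hω, mul_zero]
  -- integrability of the two score terms and conclusion
  have hint1 : Integrable
      (fun ω => (if A ω = da ω then (1:ℝ) else 0) * qb ω / (p ω * qa ω) * (Y ω - μs ω)) P := by
    refine (hY.sub hμsint).bdd_mul ?_ (c := (1 - c) / (c * c)) (Filter.Eventually.of_forall fun ω => ?_)
    · exact ((hIaM.mul (hqbmeas.mono hmHM le_rfl)).div ((hpmeas.mono (hmH.trans hmHM) le_rfl).mul
        (hqameas.mono hmHM le_rfl))).aestronglyMeasurable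
    · have hb : ‖(if A ω = da ω then (1:ℝ) else 0) * qb ω / (p ω * qa ω)‖
          ≤ ‖qb ω / (p ω * qa ω)‖ := by
        by_cases h : A ω = da ω <;> simp [h] <;> positivity
      exact hb.trans (hg1C ω)
  have hint2 : Integrable
      (fun ω => (if A ω = db ω then (1:ℝ) else 0) / p ω * (μs ω - νs ω)) P := by
    refine (hμsint.sub hνs_int).bdd_mul ?_ (c := 1 / c) (Filter.Eventually.of_forall fun ω => ?_)
    · exact (hIbM.div (hpmeas.mono (hmH.trans hmHM) le_rfl)).aestronglyMeasurable
    · have hb : ‖(if A ω = db ω then (1:ℝ) else 0) / p ω‖ ≤ ‖1 / p ω‖ := by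
        by_cases h : A ω = db ω <;> simp [h] <;> positivity
      exact hb.trans (hg2C ω)
  have hI12 : Integrable (fun ω => (if A ω = da ω then (1:ℝ) else 0) * qb ω / (p ω * qa ω)
      * (Y ω - μs ω) + (if A ω = db ω then (1:ℝ) else 0) / p ω * (μs ω - νs ω)) P :=
    hint1.add hint2
  have hs1 : ∫ ω, ((if A ω = da ω then (1:ℝ) else 0) * qb ω / (p ω * qa ω) * (Y ω - μs ω)
        + (if A ω = db ω then (1:ℝ) else 0) / p ω * (μs ω - νs ω) + νs ω) ∂P
      = (∫ ω, ((if A ω = da ω then (1:ℝ) else 0) * qb ω / (p ω * qa ω) * (Y ω - μs ω)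
        + (if A ω = db ω then (1:ℝ) else 0) / p ω * (μs ω - νs ω)) ∂P) + ∫ ω, νs ω ∂P :=
    integral_add hI12 hνs_int
  have hs2 : ∫ ω, ((if A ω = da ω then (1:ℝ) else 0) * qb ω / (p ω * qa ω) * (Y ω - μs ω)
        + (if A ω = db ω then (1:ℝ) else 0) / p ω * (μs ω - νs ω)) ∂P
      = (∫ ω, (if A ω = da ω then (1:ℝ) else 0) * qb ω / (p ω * qa ω) * (Y ω - μs ω) ∂P)
        + ∫ ω, (if A ω = db ω then (1:ℝ) else 0) / p ω * (μs ω - νs ω) ∂P :=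
    integral_add hint1 hint2
  rw [hs1, hs2, hT1, hT2]
  simp
end
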